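/- arXiv:2505.11082 — 2 statements merged into one kernel-verified Lean document; each statement's English description precedes it below -/
import Mathlib

section
/- Let G=(V,E) be a finite simple graph. Then ffn(G) = 2 if and only if G has at least one edge and every connected component of G is a caterpillar graph. -/
open scoped Classical
noncomputable section

variable {V : Type*}

/-- The neighbourhood of a set of vertices: all vertices outside `S` adjacent to some
vertex of `S`. -/
def nbhd [Fintype V] (G : SimpleGraph V) (S : Finset V) : Finset V :=
  Finset.univ.filter fun v => v ∉ S ∧ ∃ u ∈ S, G.Adj u v

/-- The burning sets of a strategy `F` (where `F i` is the firefighter set at time `i`):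
`B 0 = V` and `B (t+1) = (B t \ F (t+1)) ∪ N(B t \ F (t+1))`. -/
def burn [Fintype V] (G : SimpleGraph V) (F : ℕ → Finset V) : ℕ → Finset V
  | 0 => Finset.univ
  | t + 1 => (burn G F t \ F (t + 1)) ∪ nbhd G (burn G F t \ F (t + 1))

/-- `F` is a `T`-winning `m`-strategy for `G`. -/
def WinningStrategy [Fintype V] (G : SimpleGraph V) (m T : ℕ) (F : ℕ → Finset V) : Prop :=
  (∀ i, (F i).card ≤ m) ∧ burn G F T = ∅

/-- The firefighter number of `G`: the least `m` admitting a winning `m`-strategy. -/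
def ffn [Fintype V] (G : SimpleGraph V) : ℕ :=
  sInf {m | ∃ T F, WinningStrategy G m T F}


/-- A caterpillar graph: a tree in which all vertices are within distance 1 of a
central path. -/
def IsCaterpillar {W : Type*} (H : SimpleGraph W) : Prop :=
  H.IsTree ∧ ∃ (u v : W) (p : H.Walk u v), p.IsPath ∧
    ∀ w : W, ∃ x ∈ p.support, H.dist w x ≤ 1

/-!
A strategy is defeated by a *trap*: a family of burning sets such that, whatever the
firefighters protect, the next burning set again contains a member of the family. An edge is a
trap against one firefighter and a cycle against two; so is the spider `S(2,2,2)`, which every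
tree that is not a caterpillar contains, hanging off a longest path. Traps push forward along
injective homomorphisms, so two firefighters lose on any graph containing a cycle or a spider.

Conversely, two firefighters clear a disjoint union of caterpillars by sweeping each spine from
one end, protecting the leaves at a spine vertex before the vertex itself: at any moment the
protected region has a single outside neighbour, the next spine vertex, which is protected too.
-/

open SimpleGraph Finset

section Strategies

variable [Fintype V] {G : SimpleGraph V}

def spread (G : SimpleGraph V) (S : Finset V) : Finset V := S ∪ nbhd G S

lemma mem_nbhd {S : Finset V} {v : V} : v ∈ nbhd G S ↔ v ∉ S ∧ ∃ u ∈ S, G.Adj u v := by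
  simp [nbhd]

lemma mem_spread {S : Finset V} {v : V} :
    v ∈ spread G S ↔ v ∈ S ∨ ∃ u ∈ S, G.Adj u v := by
  by_cases hv : v ∈ S <;> simp [spread, mem_nbhd, hv]

lemma spread_mono {S S' : Finset V} (h : S ⊆ S') : spread G S ⊆ spread G S' := by
  intro v hv
  rw [mem_spread] at hv ⊢
  rcases hv with hv | ⟨u, hu, huv⟩
  exacts [Or.inl (h hv), Or.inr ⟨u, h hu, huv⟩]

lemma burn_succ (F : ℕ → Finset V) (t : ℕ) :
    burn G F (t + 1) = spread G (burn G F t \ F (t + 1)) := rfl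

def Winnable (G : SimpleGraph V) (m : ℕ) : Prop := ∃ T F, WinningStrategy G m T F

lemma Winnable.mono {m n : ℕ} (h : Winnable G m) (hmn : m ≤ n) : Winnable G n := by
  obtain ⟨T, F, hcard, hT⟩ := h
  exact ⟨T, F, fun i => (hcard i).trans hmn, hT⟩

lemma ffn_eq_succ_iff (m : ℕ) : ffn G = m + 1 ↔ Winnable G (m + 1) ∧ ¬ Winnable G m :=
  Nat.sInf_upward_closed_eq_succ_iff (fun _ _ hle h => Winnable.mono h hle) m

end Strategies

section Traps

variable {W : Type*} [Fintype V] [Fintype W]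

def IsTrap (G : SimpleGraph V) (m : ℕ) (P : Finset V → Prop) : Prop :=
  (∃ A, P A) ∧ (∀ A, P A → A.Nonempty) ∧
    ∀ A F, P A → #F ≤ m → ∃ A', P A' ∧ A' ⊆ spread G (A \ F)

lemma IsTrap.not_winnable {G : SimpleGraph V} {m : ℕ} {P : Finset V → Prop}
    (hP : IsTrap G m P) : ¬ Winnable G m := by
  obtain ⟨⟨A₀, hA₀⟩, hne, hstep⟩ := hP
  rintro ⟨T, F, hcard, hT⟩
  have hburn : ∀ t, ∃ A, P A ∧ A ⊆ burn G F t := by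
    intro t
    induction t with
    | zero => exact ⟨A₀, hA₀, subset_univ _⟩
    | succ t ih =>
      obtain ⟨A, hA, hAt⟩ := ih
      obtain ⟨A', hA', hsub⟩ := hstep A (F (t + 1)) hA (hcard _)
      exact ⟨A', hA', hsub.trans (spread_mono (sdiff_subset_sdiff hAt le_rfl))⟩
  obtain ⟨A, hA, hAT⟩ := hburn T
  obtain ⟨v, hv⟩ := hne A hA
  simpa [hT] using hAT hv

lemma IsTrap.map {H : SimpleGraph W} {G : SimpleGraph V} {m : ℕ} {P : Finset W → Prop}
    (hP : IsTrap H m P) (f : H →g G) (hf : Function.Injective f) :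
    IsTrap G m (fun A => ∃ B, P B ∧ B.image f ⊆ A) := by
  obtain ⟨⟨B₀, hB₀⟩, hne, hstep⟩ := hP
  refine ⟨⟨_, B₀, hB₀, subset_rfl⟩,
    fun A ⟨B, hB, hBA⟩ => ((hne B hB).image f).mono hBA, ?_⟩
  rintro A F ⟨B, hB, hBA⟩ hF
  have hpre : #(F.preimage f hf.injOn) ≤ m :=
    (card_le_card_of_injOn f (fun _ hx => mem_preimage.mp hx) hf.injOn).trans hF
  obtain ⟨B', hB', hsub⟩ := hstep B _ hB hpre
  have hmem : ∀ x ∈ B \ F.preimage f hf.injOn, f x ∈ A \ F := fun x hx => by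
    rw [mem_sdiff, mem_preimage] at hx
    exact mem_sdiff.mpr ⟨hBA (mem_image_of_mem f hx.1), hx.2⟩
  refine ⟨B'.image f, ⟨B', hB', subset_rfl⟩, ?_⟩
  intro _ hy
  obtain ⟨y, hyB, rfl⟩ := mem_image.mp hy
  rcases mem_spread.mp (hsub hyB) with hy | ⟨x, hx, hxy⟩
  · exact mem_spread.mpr (Or.inl (hmem y hy))
  · exact mem_spread.mpr (Or.inr ⟨f x, hmem x hx, f.map_adj hxy⟩)

lemma isTrap_of_le_card_adj {G : SimpleGraph V} {m : ℕ} {C : Finset V} (hC : C.Nonempty)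
    (hdeg : ∀ x ∈ C, m ≤ #{y ∈ C | G.Adj x y}) : IsTrap G m (C ⊆ ·) := by
  refine ⟨⟨C, subset_rfl⟩, fun A hA => hC.mono hA, fun A F hA hF => ⟨C, subset_rfl, ?_⟩⟩
  intro x hx
  by_cases hxF : x ∈ F
  · obtain ⟨y, hy, hyF⟩ : ∃ y ∈ {y ∈ C | G.Adj x y}, y ∉ F := by
      by_contra! hsub
      have hx' : x ∉ {y ∈ C | G.Adj x y} := by simp
      have := card_le_card (insert_subset hxF hsub)
      rw [card_insert_of_notMem hx'] at this
      linarith [hdeg x hx]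
    rw [mem_filter] at hy
    exact mem_spread.mpr (Or.inr ⟨y, mem_sdiff.mpr ⟨hA hy.1, hyF⟩, hy.2.symm⟩)
  · exact mem_spread.mpr (Or.inl (mem_sdiff.mpr ⟨hA hx, hxF⟩))

end Traps

section Sweeps

variable [Fintype V] {G : SimpleGraph V}

lemma nbhd_empty : nbhd G ∅ = ∅ := by
  ext v; simp [mem_nbhd]

lemma card_filter_lt_lt_card_filter_lt_iff {α : Type*} [LinearOrder α] (σ : V → α) {u v : V} :
    #{w | σ w < σ u} < #{w | σ w < σ v} ↔ σ u < σ v := by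
  constructor
  · intro h
    by_contra! hvu
    refine (card_le_card fun w => ?_).not_gt h
    simp only [mem_filter, mem_univ, true_and]
    exact fun hw => hw.trans_le hvu
  · intro h
    refine card_lt_card ((ssubset_iff_of_subset fun w => ?_).mpr ⟨u, by simp [h], by simp⟩)
    simp only [mem_filter, mem_univ, true_and]
    exact fun hw => hw.trans h

theorem winnable_of_nat_sweep {m : ℕ} (ρ : V → ℕ) (hρ : Function.Injective ρ)
    (hsep : ∀ t, #(nbhd G {u | ρ u < t}) ≤ m) : Winnable G (m + 1) := by
  set F : ℕ → Finset V := fun t => ({v | ρ v + 1 = t} : Finset V) ∪ nbhd G {u | ρ u < t}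
  have hcard : ∀ t, #(F t) ≤ m + 1 := by
    intro t
    have hone : #({v | ρ v + 1 = t} : Finset V) ≤ 1 :=
      card_le_one.mpr fun a ha b hb => hρ (by simp at ha hb; omega)
    exact (card_union_le _ _).trans (by linarith [hsep t])
  have hburn : ∀ t, ∀ v ∈ burn G F t, t ≤ ρ v := by
    intro t
    induction t with
    | zero => simp
    | succ t ih =>
      intro v hv
      rw [burn_succ, mem_spread] at hv
      rcases hv with hv | ⟨u, hu, huv⟩
      · rw [mem_sdiff] at hv
        have hvF : ρ v + 1 ≠ t + 1 := fun h => hv.2 (mem_union_left _ (by simpa using h))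
        have := ih v hv.1
        omega
      · rw [mem_sdiff] at hu
        have hut : ρ u ≠ t := fun h => hu.2 (mem_union_left _ (by simp [h]))
        have hu' := ih u hu.1
        by_contra! hvt
        refine hu.2 (mem_union_right _ (mem_nbhd.mpr ⟨?_, v, ?_, huv.symm⟩)) <;> simp <;> omega
  refine ⟨univ.sup ρ + 1, F, hcard, eq_empty_of_forall_notMem fun v hv => ?_⟩
  have := hburn _ v hv
  have := le_sup (f := ρ) (mem_univ v)
  omega

/-- Protect the vertices one at a time in the order `σ`, together with the outside neighbours of
the protected initial segment. -/
theorem winnable_of_sweep {α : Type*} [LinearOrder α] {m : ℕ} (σ : V → α)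
    (hσ : Function.Injective σ) (hsep : ∀ v, #(nbhd G {u | σ u ≤ σ v}) ≤ m) :
    Winnable G (m + 1) := by
  set ρ : V → ℕ := fun v => #{w | σ w < σ v}
  have hρ : ∀ u v, ρ u < ρ v ↔ σ u < σ v :=
    fun _ _ => card_filter_lt_lt_card_filter_lt_iff σ
  refine winnable_of_nat_sweep ρ (fun u v huv => hσ (le_antisymm ?_ ?_)) fun t => ?_
  · exact not_lt.mp fun h => ((hρ v u).mpr h).ne' huv
  · exact not_lt.mp fun h => ((hρ u v).mpr h).ne huv
  rcases ({u | ρ u < t} : Finset V).eq_empty_or_nonempty with hS | hS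
  · simp [hS, nbhd_empty]
  obtain ⟨v, hv, hmax⟩ := exists_max_image _ ρ hS
  convert hsep v using 3
  ext u
  simp only [mem_filter, mem_univ, true_and] at hv hmax ⊢
  refine ⟨fun hu => not_lt.mp fun h => (hmax u hu).not_gt ((hρ v u).mpr h), fun hu => ?_⟩
  exact lt_of_le_of_lt (not_lt.mp fun h => hu.not_gt ((hρ v u).mp h)) hv

end Sweeps

/-- A ranking exhibiting `G` as a subgraph of a disjoint union of caterpillars: the spine
vertices, ordered by rank, form the spines, and a vertex off the spine is a leaf hanging at the
spine vertex of its rank. -/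
structure SpineRanking (G : SimpleGraph V) where
  spine : Set V
  rank : V → ℕ
  injOn_rank : Set.InjOn rank spine
  adj_of_rank_lt : ∀ ⦃a b⦄, G.Adj a b → rank a < rank b →
    a ∈ spine ∧ b ∈ spine ∧ rank b = rank a + 1
  mem_spine_of_adj : ∀ ⦃a b⦄, G.Adj a b → a ∉ spine → b ∈ spine

namespace SpineRanking

variable {G : SimpleGraph V}

def key (R : SpineRanking G) (v : V) : ℕ := 2 * R.rank v + if v ∈ R.spine then 1 else 0

variable [Fintype V]

lemma rank_eq_of_mem_nbhd (R : SpineRanking G) {v y : V}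
    (hy : y ∈ nbhd G {u | toLex (R.key u, Fintype.equivFin V u) ≤
      toLex (R.key v, Fintype.equivFin V v)}) :
    y ∈ R.spine ∧ R.rank y = R.rank v + if v ∈ R.spine then 1 else 0 := by
  obtain ⟨hyS, a, haS, hay⟩ := mem_nbhd.mp hy
  simp only [mem_filter, mem_univ, true_and, not_le] at hyS haS
  have hav : R.key a ≤ R.key v := (Prod.Lex.toLex_le_toLex'.mp haS).1
  have hvy : R.key v ≤ R.key y := (Prod.Lex.toLex_lt_toLex'.mp hyS).1
  have hvy' : v ∈ R.spine → y ∈ R.spine → R.rank v ≠ R.rank y := fun hv hy h =>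
    hyS.ne (by rw [R.injOn_rank hv hy h])
  have hay' : a ∈ R.spine → y ∈ R.spine → R.rank a ≠ R.rank y := fun ha hy h =>
    hyS.not_ge (by rwa [R.injOn_rank ha hy h] at haS)
  have h₁ := R.adj_of_rank_lt hay
  have h₂ := R.adj_of_rank_lt hay.symm
  have h₃ := R.mem_spine_of_adj hay
  have h₄ := R.mem_spine_of_adj hay.symm
  unfold key at hav hvy
  by_cases ha : a ∈ R.spine <;> by_cases hy : y ∈ R.spine <;> by_cases hv : v ∈ R.spine <;>
    simp only [ha, hy, hv, if_true, if_false, true_and, false_and, and_false, not_true,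
      not_false_eq_true, forall_const, false_implies, imp_false] at * <;> omega

theorem winnable_two (R : SpineRanking G) : Winnable G 2 := by
  refine winnable_of_sweep (fun v => toLex (R.key v, Fintype.equivFin V v)) ?_ fun v => ?_
  · intro u v huv
    exact (Fintype.equivFin V).injective (Prod.ext_iff.mp (toLex.injective huv)).2
  · refine card_le_one.mpr fun y hy y' hy' => ?_
    obtain ⟨hyS, hy⟩ := R.rank_eq_of_mem_nbhd hy
    obtain ⟨hy'S, hy'⟩ := R.rank_eq_of_mem_nbhd hy'
    exact R.injOn_rank hyS hy'S (hy.trans hy'.symm)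

end SpineRanking

namespace SimpleGraph

variable {W : Type*} {H : SimpleGraph W}

lemma IsAcyclic.eq_of_isPath (hac : H.IsAcyclic) {u v : W} {p q : H.Walk u v} (hp : p.IsPath)
    (hq : q.IsPath) : p = q :=
  congrArg Subtype.val ((hac.subsingleton_path u v).elim ⟨p, hp⟩ ⟨q, hq⟩)

lemma IsAcyclic.length_eq_dist (hac : H.IsAcyclic) {u v : W} {p : H.Walk u v} (hp : p.IsPath) :
    p.length = H.dist u v := by
  obtain ⟨q, hq, hqlen⟩ := p.reachable.exists_path_of_dist
  rw [hac.eq_of_isPath hp hq, hqlen]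

lemma Walk.exists_isPath_support_subset {u v x y : W} (p : H.Walk u v) (hx : x ∈ p.support)
    (hy : y ∈ p.support) : ∃ r : H.Walk x y, r.IsPath ∧ r.support ⊆ p.support := by
  refine ⟨((p.takeUntil x hx).reverse.append (p.takeUntil y hy)).bypass, Walk.bypass_isPath _,
    fun t ht => ?_⟩
  replace ht := Walk.support_bypass_subset_support _ ht
  rw [Walk.mem_support_append_iff, Walk.support_reverse, List.mem_reverse] at ht
  exact ht.elim (fun h => Walk.support_takeUntil_subset_support _ hx h)
    (fun h => Walk.support_takeUntil_subset_support _ hy h)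

lemma IsAcyclic.support_subset_of_isPath (hac : H.IsAcyclic) {u v x y : W} (p : H.Walk u v)
    (hx : x ∈ p.support) (hy : y ∈ p.support) {q : H.Walk x y} (hq : q.IsPath) :
    q.support ⊆ p.support := by
  obtain ⟨r, hr, hrp⟩ := p.exists_isPath_support_subset hx hy
  rwa [hac.eq_of_isPath hq hr]

lemma Connected.adj_of_dist_le_one (hconn : H.Connected) {w x : W} (hne : w ≠ x)
    (h : H.dist w x ≤ 1) : H.Adj w x :=
  dist_eq_one_iff_adj.mp (le_antisymm h (hconn.pos_dist_of_ne hne))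

lemma IsAcyclic.eq_of_adj_of_notMem_support (hac : H.IsAcyclic) {u v w x y : W}
    (p : H.Walk u v) (hw : w ∉ p.support) (hx : x ∈ p.support) (hy : y ∈ p.support)
    (hwx : H.Adj w x) (hwy : H.Adj w y) : x = y := by
  by_contra hxy
  have hq : (Walk.cons hwx.symm (Walk.cons hwy Walk.nil)).IsPath := by
    simp [hwx.ne', hwy.ne, hxy]
  exact hw (hac.support_subset_of_isPath p hx hy hq (by simp))

lemma IsAcyclic.not_adj_of_notMem_support (hac : H.IsAcyclic) {u v w z x y : W}
    (p : H.Walk u v) (hw : w ∉ p.support) (hz : z ∉ p.support) (hx : x ∈ p.support)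
    (hy : y ∈ p.support) (hwx : H.Adj w x) (hzy : H.Adj z y) : ¬ H.Adj w z := by
  intro hwz
  rcases eq_or_ne x y with rfl | hxy
  · exact hac.cliqueFree le_rfl {x, w, z} (is3Clique_triple_iff.mpr ⟨hwx.symm, hzy.symm, hwz⟩)
  have hq : (Walk.cons hwx.symm (Walk.cons hwz (Walk.cons hzy Walk.nil))).IsPath := by
    simp [hwx.ne', hwz.ne, hzy.ne, hxy, ne_of_mem_of_not_mem hx hz,
      (ne_of_mem_of_not_mem hy hw).symm]
  exact hw (hac.support_subset_of_isPath p hx hy hq (by simp))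

lemma IsAcyclic.eq_of_dist_eq (hac : H.IsAcyclic) {u v x y : W} {p : H.Walk u v}
    (hp : p.IsPath) (hx : x ∈ p.support) (hy : y ∈ p.support)
    (h : H.dist u x = H.dist u y) : x = y := by
  have hget : ∀ z (hz : z ∈ p.support), p.getVert (H.dist u z) = z := fun z hz => by
    rw [← hac.length_eq_dist (hp.takeUntil hz)]
    exact Walk.getVert_length_takeUntil hz
  rw [← hget x hx, h, hget y hy]

end SimpleGraph

theorem IsCaterpillar.exists_spineRanking {W : Type*} [Fintype W] {H : SimpleGraph W}
    (hH : IsCaterpillar H) : ∃ R : SpineRanking H, ∀ w, R.rank w < Fintype.card W := by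
  obtain ⟨htree, u, v, p, hp, hdom⟩ := hH
  have hac := htree.isAcyclic
  have hanchor : ∀ w, ∃ x ∈ p.support,
      (w ∈ p.support → x = w) ∧ (w ∉ p.support → H.Adj w x) := by
    intro w
    by_cases hw : w ∈ p.support
    · exact ⟨w, hw, fun _ => rfl, fun h => absurd hw h⟩
    · obtain ⟨x, hx, hwx⟩ := hdom w
      exact ⟨x, hx, fun h => absurd h hw,
        fun _ => htree.connected.adj_of_dist_le_one (ne_of_mem_of_not_mem hx hw).symm hwx⟩
  choose anchor hanchor_mem hanchor_self hanchor_adj using hanchor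
  have hoff : ∀ ⦃a b⦄, H.Adj a b → a ∉ p.support → b ∈ p.support := by
    intro a b hab ha
    by_contra hb
    exact hac.not_adj_of_notMem_support p ha hb (hanchor_mem a) (hanchor_mem b)
      (hanchor_adj a ha) (hanchor_adj b hb) hab
  have hleaf : ∀ ⦃a b⦄, H.Adj a b → a ∉ p.support → anchor a = b := fun a b hab ha =>
    hac.eq_of_adj_of_notMem_support p ha (hanchor_mem a) (hoff hab ha) (hanchor_adj a ha) hab
  refine ⟨{ spine := {x | x ∈ p.support}
            rank := fun w => H.dist u (anchor w)
            injOn_rank := fun x hx y hy h => ?_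
            adj_of_rank_lt := fun a b hab hlt => ?_
            mem_spine_of_adj := hoff }, fun w => ?_⟩
  · simp only at h
    rw [hanchor_self x hx, hanchor_self y hy] at h
    exact hac.eq_of_dist_eq hp hx hy h
  · by_cases ha : a ∈ p.support
    · by_cases hb : b ∈ p.support
      · rw [hanchor_self a ha, hanchor_self b hb] at hlt ⊢
        have := htree.connected.dist_triangle (u := u) (v := a) (w := b)
        rw [dist_eq_one_iff_adj.mpr hab] at this
        exact ⟨ha, hb, by omega⟩
      · rw [hleaf hab.symm hb, hanchor_self a ha] at hlt
        exact absurd hlt (lt_irrefl _)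
    · rw [hleaf hab ha, hanchor_self b (hoff hab ha)] at hlt
      exact absurd hlt (lt_irrefl _)
  · calc H.dist u (anchor w) ≤ (p.takeUntil _ (hanchor_mem w)).length := dist_le _
      _ ≤ p.length := Walk.length_takeUntil_le_length _ _
      _ < Fintype.card W := hp.length_lt

lemma Nat.eq_and_eq_of_mul_add_eq_mul_add {N i j x y : ℕ} (hx : x < N) (hy : y < N)
    (h : N * i + x = N * j + y) : i = j ∧ x = y := by
  have hN : 0 < N := by omega
  have hdiv := congrArg (· / N) h
  have hmod := congrArg (· % N) h
  simp only [Nat.mul_add_div hN, Nat.div_eq_of_lt hx, Nat.div_eq_of_lt hy, Nat.mul_add_mod,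
    Nat.mod_eq_of_lt hx, Nat.mod_eq_of_lt hy, add_zero] at hdiv hmod
  exact ⟨hdiv, hmod⟩

/-- The components are ranked one after the other, each in a block of `card V` ranks. -/
theorem SpineRanking.nonempty_of_isCaterpillar [Fintype V] {G : SimpleGraph V}
    (hcat : ∀ c : G.ConnectedComponent, IsCaterpillar (G.induce c.supp)) :
    Nonempty (SpineRanking G) := by
  choose R hR using fun c => (hcat c).exists_spineRanking
  set N := Fintype.card V
  set e := Fintype.equivFin G.ConnectedComponent
  have hRN : ∀ c x, (R c).rank x < N := fun c x => (hR c x).trans_le (Fintype.card_subtype_le _)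
  have hmem : ∀ v, v ∈ (G.connectedComponentMk v).supp := fun v => rfl
  set rank : V → ℕ := fun v => N * e (G.connectedComponentMk v) + (R _).rank ⟨v, hmem v⟩
  set spine : Set V := {v | ⟨v, hmem v⟩ ∈ (R _).spine}
  have hrank : ∀ c v (hv : v ∈ c.supp), rank v = N * e c + (R c).rank ⟨v, hv⟩ := by
    rintro c v rfl; rfl
  have hspine : ∀ c v (hv : v ∈ c.supp), v ∈ spine ↔ ⟨v, hv⟩ ∈ (R c).spine := by
    rintro c v rfl; rfl
  refine ⟨{ spine, rank, injOn_rank := ?_, adj_of_rank_lt := ?_, mem_spine_of_adj := ?_ }⟩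
  · intro a ha b hb hab
    have hc := (Nat.eq_and_eq_of_mul_add_eq_mul_add (hRN _ _) (hRN _ _) hab).1
    have hb' : b ∈ (G.connectedComponentMk a).supp := e.injective (Fin.ext hc).symm
    rw [hrank _ b hb'] at hab
    have hr := (Nat.eq_and_eq_of_mul_add_eq_mul_add (hRN _ _) (hRN _ _) hab).2
    exact congrArg Subtype.val ((R _).injOn_rank ha ((hspine _ b hb').mp hb) hr)
  · intro a b hab hlt
    have hb := (G.connectedComponentMk a).mem_supp_of_adj_mem_supp (hmem a) hab
    rw [hrank _ b hb] at hlt ⊢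
    obtain ⟨ha', hb', hr⟩ := (R _).adj_of_rank_lt (a := ⟨a, hmem a⟩) (b := ⟨b, hb⟩) hab
      (by simp only [rank] at hlt; omega)
    exact ⟨ha', (hspine _ b hb).mpr hb', by simp only [rank]; omega⟩
  · intro a b hab ha
    have hb := (G.connectedComponentMk a).mem_supp_of_adj_mem_supp (hmem a) hab
    exact (hspine _ b hb).mpr
      ((R _).mem_spine_of_adj (a := ⟨a, hmem a⟩) (b := ⟨b, hb⟩) hab ha)

namespace SimpleGraph

variable {W : Type*} {H : SimpleGraph W}

lemma Walk.IsCycle.exists_adj_adj {w x : W} {c : H.Walk w w} (hc : c.IsCycle)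
    (hx : x ∈ c.support) :
    ∃ y ∈ c.support, ∃ z ∈ c.support, y ≠ z ∧ H.Adj x y ∧ H.Adj x z := by
  have hc' := hc.rotate hx
  refine ⟨(c.rotate x hx).snd, ?_, (c.rotate x hx).penultimate, ?_, hc'.snd_ne_penultimate,
    Walk.adj_snd hc'.not_nil, (Walk.adj_penultimate hc'.not_nil).symm⟩ <;>
  exact (Walk.mem_support_rotate_iff _ _ _).mp (Walk.getVert_mem_support _ _)

lemma Walk.IsCycle.isTrap [Fintype W] {w : W} {c : H.Walk w w} (hc : c.IsCycle) :
    IsTrap H 2 (c.support.toFinset ⊆ ·) := by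
  refine isTrap_of_le_card_adj ⟨w, by simp⟩ fun x hx => ?_
  obtain ⟨y, hy, z, hz, hyz, hxy, hxz⟩ := hc.exists_adj_adj (List.mem_toFinset.mp hx)
  rw [← card_pair hyz]
  exact card_le_card fun t ht => by
    rcases mem_insert.mp ht with rfl | ht
    · simp [hy, hxy]
    · rw [mem_singleton] at ht; subst ht; simp [hz, hxz]

lemma Walk.IsPath.getVert_ne_start {u v : W} {p : H.Walk u v} (hp : p.IsPath) {i : ℕ}
    (hi : 0 < i) (hip : i ≤ p.length) : p.getVert i ≠ u := fun h =>
  hi.ne' (hp.getVert_injOn (Set.mem_ofPred.mpr hip) (Set.mem_ofPred.mpr (Nat.zero_le _))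
    (h.trans p.getVert_zero.symm))

lemma Walk.IsPath.exists_isPath_length_add_two {x w e : W} {q : H.Walk x w} (hq : q.IsPath)
    (hq2 : 2 ≤ q.length) {s : H.Walk x e} (hs : s.IsPath)
    (hqs : ∀ t ∈ q.support, t ∈ s.support → t = x) :
    ∃ (a : W) (r : H.Walk a e), r.IsPath ∧ r.length = s.length + 2 := by
  have h01 : H.Adj x (q.getVert 1) := by simpa using q.adj_getVert_succ (i := 0) (by omega)
  have h12 : H.Adj (q.getVert 1) (q.getVert 2) := q.adj_getVert_succ (by omega)
  have hoff : ∀ i, 0 < i → i ≤ q.length → q.getVert i ∉ s.support := fun i hi hiq h =>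
    hq.getVert_ne_start hi hiq (hqs _ (q.getVert_mem_support i) h)
  exact ⟨_, Walk.cons h12.symm (Walk.cons h01.symm s),
    (hs.cons (hoff 1 one_pos (by omega))).cons (by simp [h12.ne', hoff 2 two_pos hq2]), by simp⟩

lemma exists_isPath_forall_length_le [Fintype W] [Nonempty W] (H : SimpleGraph W) :
    ∃ (u v : W) (p : H.Walk u v), p.IsPath ∧
      ∀ (a b : W) (q : H.Walk a b), q.IsPath → q.length ≤ p.length := by
  set S : Set ℕ := {n | ∃ (a b : W) (q : H.Walk a b), q.IsPath ∧ q.length = n}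
  have hbdd : BddAbove S := ⟨Fintype.card W, by
    rintro _ ⟨a, b, q, hq, rfl⟩
    exact hq.length_lt.le⟩
  have hne : S.Nonempty := ⟨0, Classical.arbitrary W, _, .nil, by simp, rfl⟩
  obtain ⟨u, v, p, hp, hlen⟩ := Nat.sSup_mem hne hbdd
  exact ⟨u, v, p, hp, fun a b q hq => hlen ▸ le_csSup hbdd ⟨a, b, q, hq, rfl⟩⟩

lemma Connected.exists_isPath_to_nearest (hconn : H.Connected) {s : Finset W} (hs : s.Nonempty)
    (w : W) : ∃ x ∈ s, ∃ q : H.Walk x w, q.IsPath ∧ q.length = H.dist x w ∧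
      ∀ t ∈ q.support, t ∈ s → t = x := by
  obtain ⟨x, hx, hmin⟩ := exists_min_image s (H.dist w) hs
  obtain ⟨q, hq, hqlen⟩ := (hconn w x).exists_path_of_dist
  refine ⟨x, hx, q.reverse, hq.reverse, by rw [Walk.length_reverse, hqlen, dist_comm],
    fun t ht hts => ?_⟩
  rw [Walk.support_reverse, List.mem_reverse] at ht
  by_contra htx
  have := (hmin t hts).trans_lt ((dist_le _).trans_lt (Walk.length_takeUntil_lt_length ht htx))
  omega

end SimpleGraph

section Spider

/-- The spider `S(2,2,2)` is the tree with centre `0` and legs `0 - 1 - 4`, `0 - 2 - 5`,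
`0 - 3 - 6`. -/
def spiderParent : Fin 7 → Fin 7 := ![0, 0, 0, 0, 1, 2, 3]

def spider : SimpleGraph (Fin 7) := SimpleGraph.fromRel fun a b => spiderParent a = b

instance : DecidableRel spider.Adj := fun a b => inferInstanceAs (Decidable (a ≠ b ∧ _))

def spiderTraps : List (Finset (Fin 7)) :=
  [{0,1,2,3}, {0,1,2,6}, {0,1,3,5}, {0,2,3,4}, {0,1,2,4,5}, {0,1,3,4,6}, {0,1,4,5,6},
   {0,2,3,5,6}, {0,2,4,5,6}, {0,3,4,5,6}, {1,2,3,4,5}, {1,2,3,4,6}, {1,2,3,5,6},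
   {1,2,4,5,6}, {1,3,4,5,6}, {2,3,4,5,6}]

lemma isTrap_spider : IsTrap spider 2 (· ∈ spiderTraps) := by
  have hstep : ∀ A ∈ spiderTraps, ∀ F : Finset (Fin 7), #F ≤ 2 →
      ∃ A' ∈ spiderTraps, ∀ y ∈ A', y ∈ A \ F ∨ ∃ x ∈ A \ F, spider.Adj x y := by
    set_option maxRecDepth 10000 in decide
  refine ⟨⟨_, List.mem_cons_self⟩, by set_option maxRecDepth 10000 in decide,
    fun A F hA hF => ?_⟩
  obtain ⟨A', hA', hsub⟩ := hstep A hA F hF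
  -- `convert` reconciles the instances found by `decide` with the classical ones of `spread`
  exact ⟨A', hA', fun y hy => mem_spread.mpr (by convert hsub y hy)⟩

end Spider

namespace SimpleGraph

variable {W : Type*} {H : SimpleGraph W}

/-- The spider centred at `x = p (j + 2)` with two legs along `p` and the third along `q`. -/
lemma exists_spider_hom_of_isPath {u v x w : W} {p : H.Walk u v} (hp : p.IsPath) {j : ℕ}
    (hj : j + 4 ≤ p.length) (hx : p.getVert (j + 2) = x) {q : H.Walk x w} (hq : q.IsPath)
    (hq2 : 2 ≤ q.length) (hqp : ∀ t ∈ q.support, t ∈ p.support → t = x) :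
    ∃ f : spider →g H, Function.Injective f := by
  subst hx
  have hpadj : ∀ i, i < p.length → H.Adj (p.getVert i) (p.getVert (i + 1)) :=
    fun i hi => p.adj_getVert_succ hi
  have hq0 : H.Adj (p.getVert (j + 2)) (q.getVert 1) := by
    simpa using q.adj_getVert_succ (i := 0) (by omega)
  have hq1 : H.Adj (q.getVert 1) (q.getVert 2) := q.adj_getVert_succ (by omega)
  have hp0 := hpadj j (by omega)
  have hp1 := hpadj (j + 1) (by omega)
  have hp2 := hpadj (j + 2) (by omega)
  have hp3 := hpadj (j + 3) (by omega)
  have hmix : ∀ i i', 0 < i → i ≤ q.length → q.getVert i ≠ p.getVert i' :=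
    fun i i' hi hiq h =>
    hq.getVert_ne_start hi hiq (hqp _ (q.getVert_mem_support i) (h ▸ p.getVert_mem_support i'))
  set ι : Fin 7 → W := ![p.getVert (j + 2), p.getVert (j + 1), p.getVert (j + 3), q.getVert 1,
    p.getVert j, p.getVert (j + 4), q.getVert 2]
  refine ⟨⟨ι, fun {a b} hab => ?_⟩, fun a b hab => ?_⟩
  · have hparent : ∀ a : Fin 7, a ≠ 0 → H.Adj (ι a) (ι (spiderParent a)) := by
      intro a ha
      fin_cases a <;> simp [ι, spiderParent] at ha ⊢ <;>
        first | assumption | exact Adj.symm (by assumption)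
    obtain ⟨hne, rfl | rfl⟩ := hab
    · exact hparent a fun h => hne (h ▸ rfl)
    · exact (hparent b fun h => hne (h ▸ rfl)).symm
  · fin_cases a <;> fin_cases b <;> simp at hab ⊢ <;>
      first
      | exact absurd (hp.getVert_injOn (Set.mem_ofPred.mpr (by omega))
          (Set.mem_ofPred.mpr (by omega)) hab) (by omega)
      | exact absurd (hq.getVert_injOn (Set.mem_ofPred.mpr (by omega))
          (Set.mem_ofPred.mpr (by omega)) hab) (by omega)
      | exact hmix _ _ (by omega) (by omega) hab
      | exact hmix _ _ (by omega) (by omega) hab.symm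

/-- Take a longest path `p`, a vertex `w` at distance at least `2` from it, and a shortest path
`q` from `p` to `w`, leaving `p` at `x`. By maximality of `p`, both halves of `p` at `x` have
length at least `2`. -/
theorem IsTree.exists_spider_hom_of_not_isCaterpillar [Fintype W] (htree : H.IsTree)
    (hnot : ¬ IsCaterpillar H) : ∃ f : spider →g H, Function.Injective f := by
  have := htree.connected.nonempty
  obtain ⟨u, v, p, hp, hmax⟩ := exists_isPath_forall_length_le H
  obtain ⟨w, hw⟩ : ∃ w, ∀ x ∈ p.support, 2 ≤ H.dist x w := by
    by_contra! h
    refine hnot ⟨htree, u, v, p, hp, fun w => ?_⟩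
    obtain ⟨x, hx, hxw⟩ := h w
    exact ⟨x, hx, by rw [dist_comm]; omega⟩
  obtain ⟨x, hx, q, hq, hqlen, hqp⟩ :=
    htree.connected.exists_isPath_to_nearest (s := p.support.toFinset) ⟨u, by simp⟩ w
  simp only [List.mem_toFinset] at hx hqp
  have hq2 : 2 ≤ q.length := hqlen ▸ hw x hx
  have hext : ∀ {e} (s : H.Walk x e), s.IsPath → s.support ⊆ p.support →
      s.length + 2 ≤ p.length := fun s hs hsp => by
    obtain ⟨a, r, hr, hrlen⟩ :=
      hq.exists_isPath_length_add_two hq2 hs fun t ht hts => hqp t ht (hsp hts)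
    exact hrlen ▸ hmax _ _ r hr
  have hsplit : (p.takeUntil x hx).length + (p.dropUntil x hx).length = p.length := by
    rw [← Walk.length_append, Walk.take_spec]
  have hleft := hext _ (hp.dropUntil hx) (Walk.support_dropUntil_subset_support _ hx)
  have hright := hext _ (hp.takeUntil hx).reverse fun t ht => by
    rw [Walk.support_reverse, List.mem_reverse] at ht
    exact Walk.support_takeUntil_subset_support _ hx ht
  rw [Walk.length_reverse] at hright
  refine exists_spider_hom_of_isPath hp (j := (p.takeUntil x hx).length - 2) (by omega) ?_ hq hq2
    hqp
  rw [show (p.takeUntil x hx).length - 2 + 2 = (p.takeUntil x hx).length by omega]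
  exact Walk.getVert_length_takeUntil hx

end SimpleGraph

section Characterization

variable [Fintype V] {G : SimpleGraph V}

theorem isCaterpillar_of_winnable_two (h : Winnable G 2) (c : G.ConnectedComponent) :
    IsCaterpillar (G.induce c.supp) := by
  have hf := (Embedding.induce (G := G) c.supp).injective
  have hac : (G.induce c.supp).IsAcyclic := fun _ _ hcyc =>
    (hcyc.isTrap.map (Embedding.induce c.supp).toHom hf).not_winnable h
  by_contra hnot
  obtain ⟨g, hg⟩ := IsTree.exists_spider_hom_of_not_isCaterpillar
    ⟨c.connected_toSimpleGraph, hac⟩ hnot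
  exact (isTrap_spider.map ((Embedding.induce c.supp).toHom.comp g) (hf.comp hg)).not_winnable h

theorem winnable_two_iff :
    Winnable G 2 ↔ ∀ c : G.ConnectedComponent, IsCaterpillar (G.induce c.supp) :=
  ⟨isCaterpillar_of_winnable_two,
    fun h => (SpineRanking.nonempty_of_isCaterpillar h).some.winnable_two⟩

theorem winnable_one_iff : Winnable G 1 ↔ ¬ G.edgeSet.Nonempty := by
  constructor
  · rintro h ⟨e, he⟩
    induction e using Sym2.ind with | h x y => ?_
    refine (isTrap_of_le_card_adj (C := {x, y}) (insert_nonempty _ _) fun z hz => ?_).not_winnable h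
    rw [one_le_card]
    rw [mem_edgeSet] at he
    rcases mem_insert.mp hz with rfl | hz
    · exact ⟨y, by simp [he]⟩
    · rw [mem_singleton.mp hz]
      exact ⟨x, by simp [he.symm]⟩
  · intro h
    have hadj : ∀ u v, ¬ G.Adj u v := fun u v huv => h ⟨s(u, v), huv⟩
    refine winnable_of_sweep (Fintype.equivFin V) (Fintype.equivFin V).injective fun v => ?_
    simp [nbhd, hadj]

end Characterization

/-- Characterization: `ffn G = 2` iff `G` has at least one edge and every connected
component of `G` is a caterpillar. -/
theorem ffn_eq_two_iff [Fintype V] (G : SimpleGraph V) :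
    ffn G = 2 ↔ G.edgeSet.Nonempty ∧
      ∀ c : G.ConnectedComponent, IsCaterpillar (G.induce c.supp) := by
  rw [show 2 = 1 + 1 from rfl, ffn_eq_succ_iff, winnable_two_iff, winnable_one_iff, not_not,
    and_comm]
end
end

section
/- For all n, m ∈ ℕ_{>0}, the complete bipartite graph K_{n,m} satisfies ffn(K_{n,m}) = min{n, m} + 1. -/
/-!
Every vertex of `K_{n,m}` has degree at least `min n m`, and with at most `δ(G)` firefighters
the fire survives forever: some closed neighbourhood is always burning, and it is too large to
be protected at once. Conversely either side of `K_{n,m}` is a vertex cover `C`; while `C` is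
protected the fire outside `C` cannot spread, so protecting one further vertex per step puts
it out with `|C| + 1` firefighters.
-/

open scoped Classical
noncomputable section

variable {V : Type*}

open Finset SimpleGraph

section Burning

variable [Fintype V] {G : SimpleGraph V} {F : ℕ → Finset V} {t : ℕ}

lemma mem_burn_succ {v : V} :
    v ∈ burn G F (t + 1) ↔ ∃ u ∈ burn G F t \ F (t + 1), u = v ∨ G.Adj u v := by
  simp only [burn, mem_union, nbhd, mem_filter, mem_univ, true_and]
  constructor
  · rintro (hv | ⟨-, u, hu, huv⟩)
    exacts [⟨v, hv, .inl rfl⟩, ⟨u, hu, .inr huv⟩]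
  · rintro ⟨u, hu, rfl | huv⟩
    · exact .inl hu
    · by_cases hv : v ∈ burn G F t \ F (t + 1)
      exacts [.inl hv, .inr ⟨hv, u, hu, huv⟩]

lemma WinningStrategy.mono {m m' T : ℕ} (h : WinningStrategy G m T F) (hm : m ≤ m') :
    WinningStrategy G m' T F :=
  ⟨fun i => (h.1 i).trans hm, h.2⟩

lemma winningStrategy_univ : WinningStrategy G (Fintype.card V) 1 fun _ => univ :=
  show _ ∧ _ from ⟨fun _ => (card_univ (α := V)).le, by simp [burn, nbhd]⟩

lemma exists_winningStrategy_ffn : ∃ T F, WinningStrategy G (ffn G) T F :=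
  Nat.sInf_mem (s := {m | ∃ T F, WinningStrategy G m T F}) ⟨_, 1, _, winningStrategy_univ⟩

lemma ffn_le_of_winningStrategy {m T : ℕ} (h : WinningStrategy G m T F) : ffn G ≤ m :=
  Nat.sInf_le ⟨T, F, h⟩

end Burning

section LowerBound

variable [Fintype V] {G : SimpleGraph V} [DecidableRel G.Adj] {k : ℕ}
  {F : ℕ → Finset V}

/-- A burning closed neighbourhood has more than `k` vertices, so one of them escapes the
firefighters, and its own closed neighbourhood burns at the next step. -/
lemma exists_insert_neighborFinset_subset_burn [Nonempty V] (hdeg : ∀ v, k ≤ G.degree v)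
    (hF : ∀ i, #(F i) ≤ k) (t : ℕ) : ∃ v, insert v (G.neighborFinset v) ⊆ burn G F t := by
  induction t with
  | zero => exact ⟨Classical.arbitrary V, subset_univ _⟩
  | succ t ih =>
    obtain ⟨v, hv⟩ := ih
    have hlt : #(F (t + 1)) < #(burn G F t) :=
      calc #(F (t + 1)) ≤ G.degree v := (hF _).trans (hdeg v)
        _ < #(insert v (G.neighborFinset v)) := by
          rw [card_insert_of_notMem (G.notMem_neighborFinset_self v),
            card_neighborFinset_eq_degree]
          exact Nat.lt_succ_self _
        _ ≤ #(burn G F t) := card_le_card hv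
    obtain ⟨u, hu, huF⟩ := exists_mem_notMem_of_card_lt_card hlt
    have hu' : u ∈ burn G F t \ F (t + 1) := mem_sdiff.2 ⟨hu, huF⟩
    refine ⟨u, insert_subset (mem_burn_succ.2 ⟨u, hu', .inl rfl⟩) fun w hw => ?_⟩
    exact mem_burn_succ.2 ⟨u, hu', .inr ((G.mem_neighborFinset u w).1 hw)⟩

lemma not_winningStrategy_of_le_degree [Nonempty V] (hdeg : ∀ v, k ≤ G.degree v) (T : ℕ) :
    ¬ WinningStrategy G k T F := by
  rintro ⟨hF, hT⟩
  obtain ⟨v, hv⟩ := exists_insert_neighborFinset_subset_burn hdeg hF T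
  simpa [hT] using hv (mem_insert_self v _)

lemma lt_ffn_of_le_degree [Nonempty V] (hdeg : ∀ v, k ≤ G.degree v) : k < ffn G := by
  by_contra! hle
  obtain ⟨T, F, hwin⟩ := exists_winningStrategy_ffn (G := G)
  exact not_winningStrategy_of_le_degree hdeg T (WinningStrategy.mono hwin hle)

end LowerBound

section UpperBound

variable [Fintype V] {G : SimpleGraph V} {C : Finset V} {F : ℕ → Finset V}

/-- Fire cannot spread between vertices outside a protected vertex cover `C`, so a vertex
outside `C` burns only if it burnt before and was not protected. -/
lemma notMem_of_mem_burn_of_isVertexCover (hC : G.IsVertexCover C) (hCF : ∀ i, C ⊆ F i)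
    {t : ℕ} {v : V} (hv : v ∈ burn G F t) (hvC : v ∉ C) : ∀ i ∈ Icc 1 t, v ∉ F i := by
  induction t generalizing v with
  | zero => simp
  | succ t ih =>
    obtain ⟨u, hu, rfl | huv⟩ := mem_burn_succ.1 hv
    · intro i hi
      obtain ⟨hu, huF⟩ := mem_sdiff.1 hu
      rcases (mem_Icc.1 hi).2.lt_or_eq with hlt | rfl
      exacts [ih hu hvC i (mem_Icc.2 ⟨(mem_Icc.1 hi).1, Nat.le_of_lt_succ hlt⟩), huF]
    · have huC : u ∉ C := fun h => (mem_sdiff.1 hu).2 (hCF _ h)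
      exact absurd ((hC huv).resolve_left huC) hvC

lemma burn_eq_empty_of_isVertexCover (hC : G.IsVertexCover C) (hCF : ∀ i, C ⊆ F i) {T : ℕ}
    (hcover : ∀ v, ∃ i ∈ Icc 1 T, v ∈ F i) : burn G F (T + 1) = ∅ := by
  refine eq_empty_of_forall_notMem fun v hv => ?_
  obtain ⟨u, hu, -⟩ := mem_burn_succ.1 hv
  obtain ⟨hu, huF⟩ := mem_sdiff.1 hu
  obtain ⟨i, hi, huFi⟩ := hcover u
  exact notMem_of_mem_burn_of_isVertexCover hC hCF hu (fun h => huF (hCF _ h)) i hi huFi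

/-- Protect `C` at every step, and in addition the vertices of `V` one at a time. -/
lemma ffn_le_card_add_one_of_isVertexCover (hC : G.IsVertexCover C) : ffn G ≤ #C + 1 := by
  let idx : V → ℕ := fun v => Fintype.equivFin V v + 1
  let F : ℕ → Finset V := fun i => C ∪ univ.filter fun v => idx v = i
  have hcard (i : ℕ) : #(F i) ≤ #C + 1 := by
    refine (card_union_le _ _).trans (Nat.add_le_add_left ?_ _)
    refine card_le_one.2 fun a ha b hb => (Fintype.equivFin V).injective (Fin.ext ?_)
    simp only [mem_filter, mem_univ, true_and, idx] at ha hb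
    omega
  have hcover (v : V) : ∃ i ∈ Icc 1 (Fintype.card V), v ∈ F i :=
    ⟨idx v, mem_Icc.2 ⟨Nat.le_add_left _ _, (Fintype.equivFin V v).isLt⟩, by simp [F]⟩
  exact ffn_le_of_winningStrategy
    ⟨hcard, burn_eq_empty_of_isVertexCover hC (fun _ => subset_union_left) hcover⟩

end UpperBound

section CompleteBipartite

variable {α β : Type*}

lemma isVertexCover_map_inl [Fintype α] :
    (completeBipartiteGraph α β).IsVertexCover (univ.map .inl : Finset (α ⊕ β)) := by
  rintro (_ | _) (_ | _) h <;> simp_all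

lemma isVertexCover_map_inr [Fintype β] :
    (completeBipartiteGraph α β).IsVertexCover (univ.map .inr : Finset (α ⊕ β)) := by
  rintro (_ | _) (_ | _) h <;> simp_all

lemma degree_completeBipartiteGraph_inl [Fintype α] [Fintype β] (a : α) :
    (completeBipartiteGraph α β).degree (.inl a) = Fintype.card β := by
  rw [← card_neighborFinset_eq_degree, ← card_univ, ← card_map (.inr : β ↪ α ⊕ β)]
  congr 1
  ext (_ | _) <;> simp

lemma degree_completeBipartiteGraph_inr [Fintype α] [Fintype β] (b : β) :
    (completeBipartiteGraph α β).degree (.inr b) = Fintype.card α := by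
  rw [← card_neighborFinset_eq_degree, ← card_univ, ← card_map (.inl : α ↪ α ⊕ β)]
  congr 1
  ext (_ | _) <;> simp

theorem ffn_completeBipartiteGraph_eq [Fintype α] [Fintype β] [Nonempty (α ⊕ β)] :
    ffn (completeBipartiteGraph α β) = min (Fintype.card α) (Fintype.card β) + 1 := by
  refine le_antisymm ?_ (lt_ffn_of_le_degree ?_)
  · rw [← min_add_add_right]
    refine le_min ?_ ?_
    · simpa using ffn_le_card_add_one_of_isVertexCover isVertexCover_map_inl
    · simpa using ffn_le_card_add_one_of_isVertexCover isVertexCover_map_inr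
  · rintro (_ | _)
    · simp [degree_completeBipartiteGraph_inl]
    · simp [degree_completeBipartiteGraph_inr]

end CompleteBipartite

theorem ffn_completeBipartiteGraph_general (n m : ℕ) (hn : 0 < n) :
    ffn (completeBipartiteGraph (Fin n) (Fin m)) = min n m + 1 := by
  have : Nonempty (Fin n ⊕ Fin m) := ⟨.inl ⟨0, hn⟩⟩
  simpa using ffn_completeBipartiteGraph_eq (α := Fin n) (β := Fin m)

/-- The firefighter number of the complete bipartite graph `K_{n,m}` is `min n m + 1`. -/
theorem ffn_completeBipartiteGraph (n m : ℕ) (hn : 0 < n) (hm : 0 < m) :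
    ffn (completeBipartiteGraph (Fin n) (Fin m)) = min n m + 1 :=
  ffn_completeBipartiteGraph_general n m hn
end
end
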